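/- Let T be a tournament and let x and y be distinct vertices of T. Let I = N^+(x) ∩ N^-(y), let X = (N^+(x) ∪ {x}) \ (N^-(y) ∪ {y}), let Y = (N^-(y) ∪ {y}) \ (N^+(x) ∪ {x}), and let M be a matching of edges of T directed from X to Y. Then there are at least |I| + |M| internally vertex-disjoint directed paths of length at most 3 from x to y in T. -/

import Mathlib

/-- `Adj` is a tournament relation: no loops, and there is exactly one directed
edge between any two distinct vertices. -/
def IsTournament {V : Type*} (Adj : V → V → Prop) : Prop :=
  (∀ v, ¬ Adj v v) ∧ ∀ u v : V, u ≠ v → (Adj u v ↔ ¬ Adj v u)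

/-- `p` is a directed path from `x` to `y`: a nonempty list of distinct vertices,
starting at `x`, ending at `y`, in which consecutive vertices are joined by a
directed edge in the forward direction. Its length (number of edges) is
`p.length - 1`; in particular it has length at most `3` iff `p.length ≤ 4`. -/
def IsDipath {V : Type*} (Adj : V → V → Prop) (x y : V) (p : List V) : Prop :=
  p ≠ [] ∧ p.Nodup ∧ p.Chain' Adj ∧ p.head? = some x ∧ p.getLast? = some y

/-!
Each vertex `w ∈ I` gives the path `x w y` and each edge `uv ∈ M` the path `x u v y`, dropping
`u` if `u = x` and `v` if `v = y`; the former is the path through the edge `xw`. In a tournament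
the path through an edge `uv` with `u ∈ N⁺[x]` and `v ∈ N⁻[y]` is a genuine path. Two such paths
meet outside `{x, y}` only if their edges share an endpoint there, which cannot happen: `M` is a
matching, and a vertex of `I` is neither in `X` (it dominates `y`) nor in `Y` (it is dominated
by `x`).
-/

section Tournament

variable {V : Type*} {Adj : V → V → Prop}

theorem IsTournament.asymm (hT : IsTournament Adj) {u v : V} (huv : Adj u v) : ¬ Adj v u := by
  by_cases h : u = v
  · exact h ▸ hT.1 u
  · exact (hT.2 u v h).1 huv

def InternallyDisjoint (x y : V) {ι : Type*} (P : ι → List V) : Prop :=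
  Pairwise fun a b => ∀ v ∈ P a, v ∈ P b → v = x ∨ v = y

theorem InternallyDisjoint.comp {x y : V} {ι κ : Type*} {P : ι → List V}
    (hP : InternallyDisjoint x y P) {f : κ → ι} (hf : f.Injective) :
    InternallyDisjoint x y (P ∘ f) :=
  Pairwise.comp_of_injective hP hf

theorem InternallyDisjoint.sum_elim {x y : V} {α β : Type*} {P : α → List V} {R : β → List V}
    (hP : InternallyDisjoint x y P) (hR : InternallyDisjoint x y R)
    (hPR : ∀ a b, ∀ v ∈ P a, v ∈ R b → v = x ∨ v = y) :
    InternallyDisjoint x y (Sum.elim P R)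
  | .inl _, .inl _, h => hP fun h' => h (congrArg _ h')
  | .inr _, .inr _, h => hR fun h' => h (congrArg _ h')
  | .inl a, .inr b, _ => hPR a b
  | .inr a, .inl b, _ => fun v hva hvb => hPR b a v hvb hva

theorem internallyDisjoint_star_sum_matching {x y : V} {I : Set V} {M : Finset (V × V)}
    (hM : ∀ e ∈ M, ∀ f ∈ M, e ≠ f → e.1 ≠ f.1 ∧ e.1 ≠ f.2 ∧ e.2 ≠ f.1 ∧ e.2 ≠ f.2)
    (hIM : ∀ w ∈ I, ∀ e ∈ M, w ≠ e.1 ∧ w ≠ e.2) :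
    InternallyDisjoint x y (Sum.elim (fun w : I => [x, w.1]) fun e : M => [e.1.1, e.1.2]) := by
  refine InternallyDisjoint.sum_elim ?_ ?_ ?_
  · rintro ⟨w, hw⟩ ⟨w', hw'⟩ hne v
    grind
  · rintro ⟨e, he⟩ ⟨f, hf⟩ hne v
    have := hM e he f hf fun h => hne (Subtype.ext h)
    grind
  · rintro ⟨w, hw⟩ ⟨e, he⟩ v
    have := hIM w hw e he
    grind

variable [DecidableEq V]

def edgePath (x y : V) (e : V × V) : List V :=
  (if e.1 = x then [x] else [x, e.1]) ++ (if e.2 = y then [y] else [e.2, y])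

theorem edgePath_subset (x y : V) (e : V × V) : edgePath x y e ⊆ [x, e.1, e.2, y] := by
  unfold edgePath
  split_ifs <;> simp [List.subset_def]

theorem length_edgePath_le (x y : V) (e : V × V) : (edgePath x y e).length ≤ 4 := by
  unfold edgePath
  split_ifs <;> simp

theorem IsTournament.isDipath_edgePath (hT : IsTournament Adj) {x y u v : V} (hxy : x ≠ y)
    (hu : u = x ∨ Adj x u) (hv : v = y ∨ Adj v y) (huv : Adj u v) :
    IsDipath Adj x y (edgePath x y (u, v)) := by
  have huv' : u ≠ v := fun h => hT.1 v (h ▸ huv)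
  have huy : u ≠ y := by
    rintro rfl
    rcases hv with rfl | hv
    · exact hT.1 _ huv
    · exact hT.asymm huv hv
  have hvx : v ≠ x := by
    rintro rfl
    rcases hu with rfl | hu
    · exact hT.1 _ huv
    · exact hT.asymm huv hu
  unfold edgePath IsDipath
  split_ifs with hux hvy hvy <;>
    simp_all [List.Chain', List.isChain_cons_cons, Ne.symm hxy, Ne.symm hvx, @eq_comm _ x u]

theorem InternallyDisjoint.edgePath {x y : V} {ι : Type*} {E : ι → V × V}
    (hE : InternallyDisjoint x y fun a => [(E a).1, (E a).2]) :
    InternallyDisjoint x y fun a => edgePath x y (E a) :=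
  hE.mono fun a b hab v hva hvb => by
    have := edgePath_subset x y (E a) hva
    have := edgePath_subset x y (E b) hvb
    grind

end Tournament

/-- Let `x ≠ y` be vertices of a tournament, `I = N⁺(x) ∩ N⁻(y)`,
`X = (N⁺(x) ∪ {x}) \ (N⁻(y) ∪ {y})`, `Y = (N⁻(y) ∪ {y}) \ (N⁺(x) ∪ {x})`, and let
`M` be a matching of edges directed from `X` to `Y`. Then there are at least
`|I| + |M|` internally vertex-disjoint directed paths of length at most `3` from
`x` to `y`. -/
theorem many_internally_disjoint_short_paths
    {V : Type*} [Fintype V] [DecidableEq V] (Adj : V → V → Prop)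
    (hT : IsTournament Adj) (x y : V) (hxy : x ≠ y)
    (I Xs Ys : Set V)
    (hI : I = {w | Adj x w} ∩ {w | Adj w y})
    (hXs : Xs = ({w | Adj x w} ∪ {x}) \ ({w | Adj w y} ∪ {y}))
    (hYs : Ys = ({w | Adj w y} ∪ {y}) \ ({w | Adj x w} ∪ {x}))
    (M : Finset (V × V))
    (hM : ∀ e ∈ M, e.1 ∈ Xs ∧ e.2 ∈ Ys ∧ Adj e.1 e.2)
    (hMmatching : ∀ e ∈ M, ∀ f ∈ M, e ≠ f →
      e.1 ≠ f.1 ∧ e.1 ≠ f.2 ∧ e.2 ≠ f.1 ∧ e.2 ≠ f.2) :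
    ∃ Q : Fin (I.ncard + M.card) → List V,
      (∀ a, IsDipath Adj x y (Q a) ∧ (Q a).length ≤ 4) ∧
      ∀ a b, a ≠ b → ∀ v, v ∈ Q a → v ∈ Q b → v = x ∨ v = y := by
  subst hXs hYs
  simp only [Set.mem_sdiff, Set.mem_union, Set.mem_ofPred_eq, Set.mem_singleton_iff,
    not_or] at hM
  have hImem : ∀ w ∈ I, Adj x w ∧ Adj w y := by simp [hI]
  let edge : I ⊕ M → V × V := Sum.elim (fun w => (x, w)) Subtype.val
  have hedge : ∀ a, ((edge a).1 = x ∨ Adj x (edge a).1) ∧ ((edge a).2 = y ∨ Adj (edge a).2 y) ∧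
      Adj (edge a).1 (edge a).2 := by
    rintro (⟨w, hw⟩ | ⟨e, he⟩)
    · exact ⟨.inl rfl, .inr (hImem w hw).2, (hImem w hw).1⟩
    · obtain ⟨⟨hx, -⟩, ⟨hy, -⟩, huv⟩ := hM e he
      exact ⟨hx.symm, hy.symm, huv⟩
  have hIM : ∀ w ∈ I, ∀ e ∈ M, w ≠ e.1 ∧ w ≠ e.2 := by
    intro w hw e he
    obtain ⟨⟨-, hey⟩, ⟨-, hxe⟩, -⟩ := hM e he
    exact ⟨fun h => hey.1 (h ▸ (hImem w hw).2), fun h => hxe.1 (h ▸ (hImem w hw).1)⟩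
  have hdisj : InternallyDisjoint x y fun a => [(edge a).1, (edge a).2] := by
    convert internallyDisjoint_star_sum_matching hMmatching hIM using 2 with a
    rcases a with _ | _ <;> rfl
  have hcard : Nat.card (I ⊕ M) = I.ncard + M.card := by
    rw [Nat.card_sum, Nat.card_coe_set_eq, Nat.card_eq_fintype_card, Fintype.card_coe]
  let σ := (Finite.equivFinOfCardEq hcard).symm
  refine ⟨fun a => edgePath x y (edge (σ a)), fun a => ⟨?_, length_edgePath_le x y _⟩,
    fun a b hab => hdisj.edgePath.comp σ.injective hab⟩
  obtain ⟨hu, hv, huv⟩ := hedge (σ a)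
  exact hT.isDipath_edgePath hxy hu hv huv
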